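/- Let G be a finite acyclic directed graph with vertex set V whose edge set is partitioned into 1-edges E₁ and 2-edges E₂, satisfying axiom (B0): for each i ∈ {1,2}, every vertex has at most one entering and at most one leaving edge of color i. Let ℓ : V → {0, c, 1} be a labeling satisfying (B2(i)) (for each 2-edge (u,v), (ℓ(u),ℓ(v)) ∈ {(1,1),(1,c),(c,0),(0,0)}) and (B2(ii)) (if v has no entering 2-edge then ℓ(v) ≠ 0, and if v has no leaving 2-edge then ℓ(v) ≠ 1). Then every 2-string of G contains exactly one vertex labeled c; moreover, every vertex of the 2-string lying before this vertex has label 1, and every vertex lying after it has label 0. -/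
import Mathlib


/-- The three-element label set `{0, c, 1}`. -/
inductive Lab : Type
  | zero | c | one
deriving DecidableEq

/-- A maximal directed path (a "string") in a digraph `E`: a sequence of distinct
vertices `p 0, …, p n` with consecutive edges, whose first vertex has no entering
edge and whose last vertex has no leaving edge. -/
def IsMaxPath {V : Type*} (E : V → V → Prop) (n : ℕ) (p : Fin (n + 1) → V) : Prop :=
  Function.Injective p ∧
  (∀ i : Fin n, E (p i.castSucc) (p i.succ)) ∧
  (∀ u : V, ¬ E u (p 0)) ∧
  (∀ u : V, ¬ E (p (Fin.last n)) u)

/-- Axiom (B0) for one color: every vertex has at most one leaving and at most one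
entering edge of that color. -/
def AxiomB0 {V : Type*} (E : V → V → Prop) : Prop :=
  (∀ u v w : V, E u v → E u w → v = w) ∧ (∀ u v w : V, E u w → E v w → u = v)

/-- Local axiom (B1(i)): for each 1-edge `(u, v)`, the pair of labels `(ℓ u, ℓ v)` is
one of `(0,0), (0,c), (0,1), (c,1), (1,1)`. -/
def B1i {V : Type*} (E₁ : V → V → Prop) (ℓ : V → Lab) : Prop :=
  ∀ u v : V, E₁ u v →
    (ℓ u, ℓ v) ∈ ({(Lab.zero, Lab.zero), (Lab.zero, Lab.c), (Lab.zero, Lab.one),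
      (Lab.c, Lab.one), (Lab.one, Lab.one)} : Set (Lab × Lab))

/-- Local axiom (B1(ii)): if `v` has no entering 1-edge then `ℓ v ≠ 1`, and if `v` has
no leaving 1-edge then `ℓ v ≠ 0`. -/
def B1ii {V : Type*} (E₁ : V → V → Prop) (ℓ : V → Lab) : Prop :=
  ∀ v : V, ((∀ u : V, ¬ E₁ u v) → ℓ v ≠ Lab.one) ∧ ((∀ u : V, ¬ E₁ v u) → ℓ v ≠ Lab.zero)

/-- Local axiom (B2(i)): for each 2-edge `(u, v)`, the pair of labels `(ℓ u, ℓ v)` is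
one of `(1,1), (1,c), (c,0), (0,0)`. -/
def B2i {V : Type*} (E₂ : V → V → Prop) (ℓ : V → Lab) : Prop :=
  ∀ u v : V, E₂ u v →
    (ℓ u, ℓ v) ∈ ({(Lab.one, Lab.one), (Lab.one, Lab.c), (Lab.c, Lab.zero),
      (Lab.zero, Lab.zero)} : Set (Lab × Lab))

/-- Local axiom (B2(ii)): if `v` has no entering 2-edge then `ℓ v ≠ 0`, and if `v` has
no leaving 2-edge then `ℓ v ≠ 1`. -/
def B2ii {V : Type*} (E₂ : V → V → Prop) (ℓ : V → Lab) : Prop :=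
  ∀ v : V, ((∀ u : V, ¬ E₂ u v) → ℓ v ≠ Lab.zero) ∧ ((∀ u : V, ¬ E₂ v u) → ℓ v ≠ Lab.one)

/-- In a finite acyclic 2-edge-colored digraph satisfying (B0), with a labeling
satisfying (B2(i)) and (B2(ii)), every 2-string contains exactly one vertex labeled `c`;
moreover every vertex before it on the string is labeled `1`, and every vertex after it
is labeled `0`. -/
theorem two_string_unique_central {V : Type*} [Fintype V] (E₁ E₂ : V → V → Prop)
    (hacyc : ∀ v : V, ¬ Relation.TransGen (fun a b => E₁ a b ∨ E₂ a b) v v)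
    (hB0₁ : AxiomB0 E₁) (hB0₂ : AxiomB0 E₂)
    (ℓ : V → Lab) (h2i : B2i E₂ ℓ) (h2ii : B2ii E₂ ℓ) :
    ∀ (n : ℕ) (q : Fin (n + 1) → V), IsMaxPath E₂ n q →
      (∃! i : Fin (n + 1), ℓ (q i) = Lab.c) ∧
      (∀ i j : Fin (n + 1), ℓ (q i) = Lab.c →
        (j < i → ℓ (q j) = Lab.one) ∧ (i < j → ℓ (q j) = Lab.zero)) := by

  classical
  intro n q ⟨hinj, hstep, hfirst, hlast⟩
  -- work with a ℕ-indexed version of the path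
  set p : ℕ → V := fun k => q ⟨min k n, by omega⟩ with hp
  have hpq : ∀ i : Fin (n + 1), q i = p i.val := by
    intro i
    have : (⟨min i.val n, by omega⟩ : Fin (n+1)) = i := by
      ext; simp; omega
    simp [hp, this]
  have step : ∀ k, k < n → E₂ (p k) (p (k + 1)) := by
    intro k hk
    have h := hstep ⟨k, hk⟩
    have e1 : (Fin.castSucc ⟨k, hk⟩ : Fin (n+1)) = ⟨min k n, by omega⟩ := by
      ext; simp; omega
    have e2 : (Fin.succ ⟨k, hk⟩ : Fin (n+1)) = ⟨min (k+1) n, by omega⟩ := by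
      ext; simp; omega
    rw [e1, e2] at h
    exact h
  have pair : ∀ k, k < n →
      (ℓ (p k), ℓ (p (k+1))) ∈ ({(Lab.one, Lab.one), (Lab.one, Lab.c), (Lab.c, Lab.zero),
      (Lab.zero, Lab.zero)} : Set (Lab × Lab)) := fun k hk => h2i _ _ (step k hk)
  have zero_fwd : ∀ k, k < n → ℓ (p k) = Lab.zero → ℓ (p (k+1)) = Lab.zero := by
    intro k hk h0
    have := pair k hk
    simp only [Set.mem_insert_iff, Set.mem_singleton_iff, Prod.mk.injEq, h0] at this
    rcases this with ⟨h,_⟩|⟨h,_⟩|⟨h,_⟩|⟨_,h⟩ <;> first | exact h | cases h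
  have one_bwd : ∀ k, k < n → ℓ (p (k+1)) = Lab.one → ℓ (p k) = Lab.one := by
    intro k hk h1
    have := pair k hk
    simp only [Set.mem_insert_iff, Set.mem_singleton_iff, Prod.mk.injEq, h1] at this
    rcases this with ⟨h,_⟩|⟨_,h⟩|⟨_,h⟩|⟨_,h⟩ <;> first | exact h | cases h
  have c_succ : ∀ k, k < n → ℓ (p k) = Lab.c → ℓ (p (k+1)) = Lab.zero := by
    intro k hk hc
    have := pair k hk
    simp only [Set.mem_insert_iff, Set.mem_singleton_iff, Prod.mk.injEq, hc] at this
    rcases this with ⟨h,_⟩|⟨h,_⟩|⟨_,h⟩|⟨h,_⟩ <;> first | exact h | cases h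
  have zero_pred : ∀ k, k < n → ℓ (p (k+1)) = Lab.zero → ℓ (p k) ≠ Lab.one := by
    intro k hk h0
    have := pair k hk
    simp only [Set.mem_insert_iff, Set.mem_singleton_iff, Prod.mk.injEq, h0] at this
    rcases this with ⟨_,h⟩|⟨_,h⟩|⟨h,_⟩|⟨h,_⟩ <;>
      first | cases h | (intro h1; rw [h] at h1; cases h1)
  have zero_prop : ∀ k j, k ≤ j → j ≤ n → ℓ (p k) = Lab.zero → ℓ (p j) = Lab.zero := by
    intro k j hkj hjn h0
    induction j with
    | zero =>
      have hk0 : k = 0 := by omega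
      rw [← hk0]; exact h0
    | succ m ih =>
      rcases Nat.lt_or_ge k (m+1) with h | h
      · exact zero_fwd m (by omega) (ih (by omega) (by omega))
      · have : k = m + 1 := by omega
        rw [← this]; exact h0
  have ne_one_prop : ∀ k j, k ≤ j → j ≤ n → ℓ (p k) ≠ Lab.one → ℓ (p j) ≠ Lab.one := by
    intro k j hkj hjn h0
    induction j with
    | zero => have : k = 0 := by omega
              rw [← this]; exact h0
    | succ m ih =>
      rcases Nat.lt_or_ge k (m+1) with h | h
      · intro h1
        exact (ih (by omega) (by omega)) (one_bwd m (by omega) h1)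
      · have : k = m + 1 := by omega
        rw [← this]; exact h0
  -- endpoints
  have hq0 : q 0 = p 0 := by rw [hpq]; rfl
  have hqn : q (Fin.last n) = p n := by rw [hpq]; rfl
  have hstart : ℓ (p 0) ≠ Lab.zero := by
    rw [← hq0]; exact (h2ii (q 0)).1 hfirst
  have hend : ℓ (p n) ≠ Lab.one := by
    rw [← hqn]; exact (h2ii (q (Fin.last n))).2 hlast
  -- the first index whose label is not 1
  have hex : ∃ k, k ≤ n ∧ ℓ (p k) ≠ Lab.one := ⟨n, le_refl n, hend⟩
  set m := Nat.find hex with hm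
  obtain ⟨hmn, hmne⟩ := Nat.find_spec hex
  have hbefore : ∀ k, k < m → ℓ (p k) = Lab.one := by
    intro k hk
    have := Nat.find_min hex hk
    by_contra h
    exact this ⟨by omega, h⟩
  have hmc : ℓ (p m) = Lab.c := by
    cases hc : ℓ (p m) with
    | one => exact absurd hc hmne
    | c => rfl
    | zero =>
      rcases Nat.eq_zero_or_pos m with h0 | h0
      · rw [h0] at hc; exact absurd hc hstart
      · obtain ⟨k, hk⟩ : ∃ k, m = k + 1 := ⟨m - 1, by omega⟩
        have h1 := hbefore k (by omega)
        rw [hk] at hc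
        exact absurd h1 (zero_pred k (by omega) hc)
  have hafter : ∀ j, m < j → j ≤ n → ℓ (p j) = Lab.zero := by
    intro j hmj hjn
    have h0 : ℓ (p (m+1)) = Lab.zero := c_succ m (by omega) hmc
    exact zero_prop (m+1) j (by omega) hjn h0
  have huniq : ∀ k, k ≤ n → ℓ (p k) = Lab.c → k = m := by
    intro k hkn hkc
    rcases Nat.lt_trichotomy k m with h | h | h
    · rw [hbefore k h] at hkc; cases hkc
    · exact h
    · rw [hafter k h hkn] at hkc; cases hkc
  refine ⟨⟨⟨m, by omega⟩, ?_, ?_⟩, ?_⟩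
  · show ℓ (q ⟨m, by omega⟩) = Lab.c
    rw [hpq]; exact hmc
  · intro i hi
    rw [hpq] at hi
    exact Fin.ext (huniq i.val (by omega) hi)
  · intro i j hci
    rw [hpq] at hci
    have him : i.val = m := huniq i.val (by omega) hci
    constructor
    · intro hji
      rw [hpq]
      exact hbefore j.val (by rw [← him]; exact hji)
    · intro hij
      rw [hpq]
      exact hafter j.val (by rw [← him]; exact hij) (by omega)
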